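/- Let j ∈ ℕ, β ∈ ℝ, and h(σ) = (1+σ²)^{1/4}. Let g : ℝ → ℂ be Schwartz and define H_{j,l}(β)g(z) = (2π)^{-1} ∫ e^{iσz} Σ_{j'=0}^{j-1} (h(σ+β) − h(β))^{j−j'} h(β)^{j'} σ^l ĝ(σ) dσ. Then ‖H_{j,l}(β)g‖_{L²} ≤ C_g h(β)^{j−1} for a constant C_g depending on g, j, l but not on β. -/

import Mathlib

open Real Complex MeasureTheory
open scoped FourierTransform

noncomputable def hfun (x : ℝ) : ℝ := (1 + x ^ 2) ^ ((1:ℝ)/4)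

noncomputable def hder (x : ℝ) : ℝ := (1:ℝ)/4 * (1 + x ^ 2) ^ ((1:ℝ)/4 - 1) * (2 * x)

lemma hfun_hasDerivAt (x : ℝ) : HasDerivAt hfun (hder x) x := by
  have h1 : HasDerivAt (fun y : ℝ => 1 + y ^ 2) (2 * x) x := by
    simpa using (hasDerivAt_pow 2 x).const_add 1
  have := h1.rpow_const (p := (1:ℝ)/4) (Or.inl (by positivity))
  convert this using 1
  · rfl
  rw [hder]; ring

lemma hder_bound (x : ℝ) : |hder x| ≤ 1 := by
  have h0 : (0:ℝ) < 1 + x ^ 2 := by positivity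
  have habs : |x| ≤ (1 + x ^ 2) ^ ((3:ℝ)/4) := by
    have h2 : |x| ≤ (1 + x ^ 2) ^ ((1:ℝ)/2) := by
      rw [← Real.sqrt_eq_rpow, show |x| = Real.sqrt (x^2) from (Real.sqrt_sq_eq_abs x).symm]
      exact Real.sqrt_le_sqrt (by linarith)
    exact h2.trans (Real.rpow_le_rpow_of_exponent_le (by nlinarith [sq_nonneg x]) (by norm_num))
  have hpos : (0:ℝ) < (1 + x ^ 2) ^ ((3:ℝ)/4) := Real.rpow_pos_of_pos h0 _
  have hneg : (1 + x ^ 2) ^ ((1:ℝ)/4 - 1) = ((1 + x ^ 2) ^ ((3:ℝ)/4))⁻¹ := by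
    rw [← Real.rpow_neg h0.le]; norm_num
  rw [hder, hneg]
  rw [_root_.abs_mul, _root_.abs_mul]
  have e1 : |(1:ℝ)/4| = 1/4 := by norm_num
  have e2 : |((1 + x ^ 2) ^ ((3:ℝ)/4))⁻¹| = ((1 + x ^ 2) ^ ((3:ℝ)/4))⁻¹ :=
    _root_.abs_of_pos (by positivity)
  have e3 : |2 * x| ≤ 2 * (1 + x ^ 2) ^ ((3:ℝ)/4) := by
    rw [_root_.abs_mul]
    have : |(2:ℝ)| = 2 := by norm_num
    rw [this]; linarith
  rw [e1, e2]
  calc (1:ℝ)/4 * ((1 + x ^ 2) ^ ((3:ℝ)/4))⁻¹ * |2 * x|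
      ≤ 1/4 * ((1 + x ^ 2) ^ ((3:ℝ)/4))⁻¹ * (2 * (1 + x ^ 2) ^ ((3:ℝ)/4)) := by
        apply mul_le_mul_of_nonneg_left e3 (by positivity)
    _ = 1/2 := by field_simp; ring
    _ ≤ 1 := by norm_num

lemma hfun_lip (a b : ℝ) : |hfun a - hfun b| ≤ |a - b| := by
  have := Convex.norm_image_sub_le_of_norm_hasDerivWithin_le
    (f := hfun) (f' := hder) (C := 1) (s := Set.univ)
    (fun x _ => (hfun_hasDerivAt x).hasDerivWithinAt)
    (fun x _ => by simpa using hder_bound x) convex_univ (Set.mem_univ b) (Set.mem_univ a)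
  simpa using this

lemma one_le_hfun (x : ℝ) : 1 ≤ hfun x :=
  Real.one_le_rpow (by nlinarith [sq_nonneg x]) (by norm_num)

lemma one_add_pow_le (t : ℝ) (ht : 0 ≤ t) (n : ℕ) : (1+t)^n ≤ 2^n * (1 + t^n) := by
  rcases le_total t 1 with h | h
  · calc (1+t)^n ≤ 2^n := pow_le_pow_left₀ (by linarith) (by linarith) n
      _ ≤ 2^n * (1 + t^n) := le_mul_of_one_le_right (by positivity)
          (by linarith [pow_nonneg ht n])
  · calc (1+t)^n ≤ (2*t)^n := pow_le_pow_left₀ (by linarith) (by linarith) n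
      _ = 2^n * t^n := mul_pow 2 t n
      _ ≤ 2^n * (1 + t^n) := by
          have : (0:ℝ) < 2^n := by positivity
          nlinarith
lemma integrable_one_add_abs_pow_mul (f : SchwartzMap ℝ ℂ) (n : ℕ) :
    Integrable (fun u : ℝ => (1+|u|)^n * ‖f u‖) := by
  have h1 := f.integrable_pow_mul (μ := volume) n
  have h0 : Integrable (fun u : ℝ => ‖f u‖) := f.integrable.norm
  apply Integrable.mono' (((h0.add h1).const_mul (2^n)))
  · exact (((continuous_const.add _root_.continuous_abs).pow n).mul
      f.continuous.norm).aestronglyMeasurable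
  · filter_upwards with u
    rw [Real.norm_eq_abs, _root_.abs_of_nonneg (by positivity)]
    simp only [Pi.add_apply]
    calc (1+|u|)^n * ‖f u‖ ≤ (2^n * (1 + |u|^n)) * ‖f u‖ := by
          apply mul_le_mul_of_nonneg_right (one_add_pow_le _ (abs_nonneg u) n) (norm_nonneg _)
      _ = 2^n * (‖f u‖ + |u|^n * ‖f u‖) := by ring
      _ = 2^n * (‖f u‖ + ‖u‖^n * ‖f u‖) := by rw [Real.norm_eq_abs]

lemma inner_integral_eq (g : SchwartzMap ℝ ℂ) (σ : ℝ) :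
    (∫ w : ℝ, Complex.exp (-Complex.I * w * σ) * g w) = 𝓕 (⇑g) (σ / (2*π)) := by
  rw [Real.fourier_eq']
  congr 1; funext w
  rw [smul_eq_mul]
  congr 1
  have hπ : (π:ℝ) ≠ 0 := Real.pi_ne_zero
  congr 1
  simp only [RCLike.inner_apply, conj_trivial]
  push_cast
  field_simp


lemma fourier_neg_eq (φ : ℝ → ℂ) (z : ℝ) :
    𝓕 φ (-z) = ∫ u : ℝ, Complex.exp (Complex.I * (2*π*u) * z) • φ u := by
  rw [Real.fourier_eq']
  congr 1; funext u
  congr 1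
  simp only [RCLike.inner_apply, conj_trivial]
  push_cast
  ring

set_option maxHeartbeats 2000000 in
theorem stmt_13 (j l : ℕ) (g : SchwartzMap ℝ ℂ) :
    ∃ C : ℝ, ∀ β : ℝ,
      Real.sqrt (∫ z : ℝ,
          ‖(2 * π)⁻¹ * ∫ σ : ℝ, Complex.exp (Complex.I * σ * z)
              * (∑ j' ∈ Finset.range j,
                  ((((1 + (σ + β) ^ 2) ^ ((1 : ℝ) / 4) - (1 + β ^ 2) ^ ((1 : ℝ) / 4)) ^ (j - j')
                      * ((1 + β ^ 2) ^ ((1 : ℝ) / 4)) ^ j' * σ ^ l : ℝ) : ℂ))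
              * (∫ w : ℝ, Complex.exp (-Complex.I * w * σ) * g w)‖ ^ 2)
        ≤ C * ((1 + β ^ 2) ^ ((1 : ℝ) / 4)) ^ (j - 1) := by
  classical
  set G : SchwartzMap ℝ ℂ := SchwartzMap.fourierTransformCLM ℝ g with hG
  set G' : SchwartzMap ℝ ℂ := SchwartzMap.derivCLM ℝ ℂ G with hG'def
  set n := j + l with hn
  set Ki : ℝ := ∫ u : ℝ, (1+|u|)^n * ‖G u‖ with hKi
  set Ki' : ℝ := ∫ u : ℝ, (1+|u|)^n * ‖G' u‖ with hKi'
  have hKiInt := integrable_one_add_abs_pow_mul G n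
  have hKi'Int := integrable_one_add_abs_pow_mul G' n
  have hKi0 : 0 ≤ Ki := integral_nonneg (fun u => by positivity)
  have hKi'0 : 0 ≤ Ki' := integral_nonneg (fun u => by positivity)
  set P : ℝ := (j:ℝ) * 7^n with hP
  set P' : ℝ := (j:ℝ) * ((j:ℝ)+(l:ℝ)) * 7^(n+1) with hP'
  have hP0 : 0 ≤ P := by positivity
  have hP'0 : 0 ≤ P' := by positivity
  refine ⟨Real.sqrt (2*π) * ((P + P') * Ki + P * Ki'), fun β => ?_⟩
  set c : ℝ := (1 + β^2) ^ ((1:ℝ)/4) with hc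
  have hc1 : (1:ℝ) ≤ c := one_le_hfun β
  have hc0 : (0:ℝ) < c := lt_of_lt_of_le one_pos hc1
  set D : ℝ → ℝ := fun σ => (1 + (σ+β)^2) ^ ((1:ℝ)/4) - c with hD
  set m : ℝ → ℝ := fun σ => ∑ j' ∈ Finset.range j, D σ ^ (j - j') * c ^ j' * σ ^ l with hm
  set m' : ℝ → ℝ := fun σ => ∑ j' ∈ Finset.range j,
      (((j - j' : ℕ):ℝ) * D σ ^ (j - j' - 1) * hder (σ+β) * c ^ j' * σ ^ l
        + D σ ^ (j - j') * c ^ j' * ((l:ℝ) * σ ^ (l-1))) with hm'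
  -- basic bounds
  have hDlip : ∀ σ : ℝ, |D σ| ≤ |σ| := by
    intro σ
    have h := hfun_lip (σ+β) β
    have e : σ + β - β = σ := by ring
    rw [e] at h
    exact h
  have hcpow : ∀ j', j' < j → c ^ j' ≤ c ^ (j-1) :=
    fun j' hj' => pow_le_pow_right₀ hc1 (by omega)
  have hm_bound : ∀ σ : ℝ, |m σ| ≤ (j:ℝ) * ((1+|σ|)^n * c^(j-1)) := by
    intro σ
    calc |m σ| ≤ ∑ j' ∈ Finset.range j, |D σ ^ (j - j') * c ^ j' * σ ^ l| :=
          Finset.abs_sum_le_sum_abs _ _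
      _ ≤ ∑ j' ∈ Finset.range j, (1+|σ|)^n * c^(j-1) := by
          apply Finset.sum_le_sum
          intro j' hj'
          rw [_root_.abs_mul, _root_.abs_mul, _root_.abs_pow, _root_.abs_pow, _root_.abs_pow,
            _root_.abs_of_pos hc0]
          have h1 : |D σ| ^ (j-j') ≤ (1+|σ|)^(j-j') :=
            pow_le_pow_left₀ (abs_nonneg _) ((hDlip σ).trans (by linarith [abs_nonneg σ])) _
          have h2 : (1+|σ|)^(j-j') ≤ (1+|σ|)^j :=
            pow_le_pow_right₀ (by linarith [abs_nonneg σ]) (Nat.sub_le j j')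
          have h3 : c ^ j' ≤ c ^ (j-1) := hcpow j' (Finset.mem_range.mp hj')
          have h4 : |σ| ^ l ≤ (1+|σ|)^l :=
            pow_le_pow_left₀ (abs_nonneg σ) (by linarith [abs_nonneg σ]) l
          calc |D σ|^(j-j') * c^j' * |σ|^l ≤ (1+|σ|)^j * c^(j-1) * (1+|σ|)^l := by
                apply mul_le_mul (mul_le_mul (h1.trans h2) h3 (by positivity) (by positivity))
                  h4 (by positivity) (by positivity)
            _ = (1+|σ|)^n * c^(j-1) := by rw [hn, pow_add]; ring
      _ = (j:ℝ) * ((1+|σ|)^n * c^(j-1)) := by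
          rw [Finset.sum_const, Finset.card_range, nsmul_eq_mul]
  have hm'_bound : ∀ σ : ℝ, |m' σ| ≤ (j:ℝ)*((j:ℝ)+(l:ℝ)) * ((1+|σ|)^n * c^(j-1)) := by
    intro σ
    have hσ1 : (1:ℝ) ≤ 1 + |σ| := by linarith [abs_nonneg σ]
    have hDpow : ∀ k : ℕ, k ≤ j → |D σ| ^ k ≤ (1+|σ|)^j := by
      intro k hk
      calc |D σ|^k ≤ (1+|σ|)^k :=
            pow_le_pow_left₀ (abs_nonneg _) ((hDlip σ).trans (by linarith)) _
        _ ≤ (1+|σ|)^j := pow_le_pow_right₀ hσ1 hk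
    calc |m' σ| ≤ ∑ j' ∈ Finset.range j,
          |(((j - j' : ℕ):ℝ) * D σ ^ (j - j' - 1) * hder (σ+β) * c ^ j' * σ ^ l
            + D σ ^ (j - j') * c ^ j' * ((l:ℝ) * σ ^ (l-1)))| := Finset.abs_sum_le_sum_abs _ _
      _ ≤ ∑ j' ∈ Finset.range j, ((j:ℝ)+(l:ℝ)) * ((1+|σ|)^n * c^(j-1)) := by
          apply Finset.sum_le_sum
          intro j' hj'
          have hj'j := Finset.mem_range.mp hj'
          have h3 : c ^ j' ≤ c ^ (j-1) := hcpow j' hj'j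
          refine (abs_add_le _ _).trans ?_
          have e1 : |((j - j' : ℕ):ℝ) * D σ ^ (j - j' - 1) * hder (σ+β) * c ^ j' * σ ^ l|
              ≤ (j:ℝ) * ((1+|σ|)^n * c^(j-1)) := by
            rw [_root_.abs_mul, _root_.abs_mul, _root_.abs_mul, _root_.abs_mul,
              _root_.abs_pow, _root_.abs_pow, _root_.abs_pow, _root_.abs_of_pos hc0,
              Nat.abs_cast]
            calc ((j - j' : ℕ):ℝ) * |D σ| ^ (j - j' - 1) * |hder (σ+β)| * c ^ j' * |σ| ^ l
                ≤ (j:ℝ) * (1+|σ|)^j * 1 * c^(j-1) * (1+|σ|)^l := by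
                  have n1 : ((j - j' : ℕ):ℝ) ≤ (j:ℝ) := by exact_mod_cast Nat.sub_le j j'
                  have n2 : |D σ| ^ (j-j'-1) ≤ (1+|σ|)^j := hDpow _ (by omega)
                  have n4 : |σ|^l ≤ (1+|σ|)^l :=
                    pow_le_pow_left₀ (abs_nonneg σ) (by linarith) l
                  apply mul_le_mul (mul_le_mul (mul_le_mul (mul_le_mul n1 n2 (by positivity)
                    (by positivity)) (hder_bound _) (abs_nonneg _) (by positivity)) h3
                    (by positivity) (by positivity)) n4 (by positivity) (by positivity)
              _ = (j:ℝ) * ((1+|σ|)^n * c^(j-1)) := by rw [hn, pow_add]; ring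
          have e2 : |D σ ^ (j - j') * c ^ j' * ((l:ℝ) * σ ^ (l-1))|
              ≤ (l:ℝ) * ((1+|σ|)^n * c^(j-1)) := by
            rw [_root_.abs_mul, _root_.abs_mul, _root_.abs_mul, _root_.abs_pow, _root_.abs_pow,
              _root_.abs_pow, _root_.abs_of_pos hc0, Nat.abs_cast]
            calc |D σ| ^ (j-j') * c ^ j' * ((l:ℝ) * |σ| ^ (l-1))
                ≤ (1+|σ|)^j * c^(j-1) * ((l:ℝ) * (1+|σ|)^l) := by
                  have n2 : |D σ| ^ (j-j') ≤ (1+|σ|)^j := hDpow _ (by omega)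
                  have n4 : |σ|^(l-1) ≤ (1+|σ|)^l := by
                    calc |σ|^(l-1) ≤ (1+|σ|)^(l-1) :=
                          pow_le_pow_left₀ (abs_nonneg σ) (by linarith) _
                      _ ≤ (1+|σ|)^l := pow_le_pow_right₀ hσ1 (Nat.sub_le l 1)
                  apply mul_le_mul (mul_le_mul n2 h3 (by positivity) (by positivity))
                    (mul_le_mul_of_nonneg_left n4 (by positivity)) (by positivity) (by positivity)
              _ = (l:ℝ) * ((1+|σ|)^n * c^(j-1)) := by rw [hn, pow_add]; ring
          linarith
      _ = (j:ℝ)*((j:ℝ)+(l:ℝ)) * ((1+|σ|)^n * c^(j-1)) := by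
          rw [Finset.sum_const, Finset.card_range, nsmul_eq_mul]; ring
  -- derivatives
  have hmD : ∀ σ : ℝ, HasDerivAt D (hder (σ+β)) σ := by
    intro σ
    have h1 : HasDerivAt (fun σ : ℝ => σ + β) 1 σ := (hasDerivAt_id σ).add_const β
    have h2 := ((hfun_hasDerivAt (σ+β)).comp σ h1).sub_const c
    simp only [hD]
    simpa [hfun, Function.comp] using h2
  have hmderiv : ∀ σ : ℝ, HasDerivAt m (m' σ) σ := by
    intro σ
    simp only [hm, hm']
    apply HasDerivAt.fun_sum
    intro j' hj'
    have h1 : HasDerivAt (fun σ : ℝ => D σ ^ (j - j'))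
        (((j-j' : ℕ):ℝ) * D σ ^ (j-j'-1) * hder (σ+β)) σ := (hmD σ).pow (j - j')
    have h2 : HasDerivAt (fun σ : ℝ => σ ^ l) ((l:ℝ) * σ^(l-1)) σ := by
      simpa using hasDerivAt_pow l σ
    have h3 : HasDerivAt (fun y => D y ^ (j - j') * c ^ j' * y ^ l) _ σ :=
      (h1.mul_const (c ^ j')).mul h2
    convert h3 using 1 <;> try ring
  -- phi
  set φ : ℝ → ℂ := fun u => m (2*π*u) • G u with hφ
  set φ' : ℝ → ℂ := fun u => m (2*π*u) • (G' u) + (m' (2*π*u) * (2*π)) • (G u) with hφ'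
  have hGd : ∀ u : ℝ, HasDerivAt (⇑G) (G' u) u := by
    intro u
    have h1 := (G.differentiableAt (x := u)).hasDerivAt
    simp only [hG'def, SchwartzMap.derivCLM_apply]
    exact h1
  have hφd : ∀ u : ℝ, HasDerivAt φ (φ' u) u := by
    intro u
    simp only [hφ, hφ']
    have h2 : HasDerivAt (fun u : ℝ => 2*π*u) (2*π) u := by
      simpa using (hasDerivAt_id u).const_mul (2*π)
    have h1 : HasDerivAt (fun u : ℝ => m (2*π*u)) (m' (2*π*u) * (2*π)) u :=
      (hmderiv (2*π*u)).comp u h2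
    exact h1.smul (hGd u)
  have hdiff : Differentiable ℝ φ := fun u => (hφd u).differentiableAt
  have hderiveq : deriv φ = φ' := funext fun u => (hφd u).deriv
  -- scaling bound
  have h7 : ∀ u : ℝ, (1+|2*π*u|)^n ≤ 7^n * (1+|u|)^n := by
    intro u
    rw [← mul_pow]
    apply pow_le_pow_left₀ (by positivity)
    have e : |2*π*u| = 2*π*|u| := by
      rw [_root_.abs_mul, _root_.abs_of_pos (by positivity : (0:ℝ) < 2*π)]
    rw [e]
    have h1 : 2*π*|u| ≤ 7*|u| := by nlinarith [Real.pi_lt_d2, abs_nonneg u]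
    linarith
  have hφ_bound : ∀ u : ℝ, ‖φ u‖ ≤ P * c^(j-1) * ((1+|u|)^n * ‖G u‖) := by
    intro u
    simp only [hφ]
    rw [norm_smul, Real.norm_eq_abs]
    calc |m (2*π*u)| * ‖G u‖ ≤ ((j:ℝ) * ((1+|2*π*u|)^n * c^(j-1))) * ‖G u‖ :=
          mul_le_mul_of_nonneg_right (hm_bound _) (norm_nonneg _)
      _ ≤ ((j:ℝ) * ((7^n * (1+|u|)^n) * c^(j-1))) * ‖G u‖ :=
          mul_le_mul_of_nonneg_right (mul_le_mul_of_nonneg_left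
            (mul_le_mul_of_nonneg_right (h7 u) (by positivity)) (Nat.cast_nonneg j))
            (norm_nonneg _)
      _ = P * c^(j-1) * ((1+|u|)^n * ‖G u‖) := by rw [hP]; ring
  have hφ'_bound : ∀ u : ℝ, ‖φ' u‖ ≤ P' * c^(j-1) * ((1+|u|)^n * ‖G u‖)
      + P * c^(j-1) * ((1+|u|)^n * ‖G' u‖) := by
    intro u
    simp only [hφ']
    refine (norm_add_le _ _).trans ?_
    rw [norm_smul, norm_smul, Real.norm_eq_abs, Real.norm_eq_abs]
    have b1 : |m' (2*π*u) * (2*π)| ≤ P' * c^(j-1) * (1+|u|)^n := by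
      rw [_root_.abs_mul, _root_.abs_of_pos (by positivity : (0:ℝ) < 2*π)]
      calc |m' (2*π*u)| * (2*π)
          ≤ ((j:ℝ)*((j:ℝ)+(l:ℝ)) * ((1+|2*π*u|)^n * c^(j-1))) * 7 := by
            apply mul_le_mul (hm'_bound _) (by linarith [Real.pi_lt_d2]) (by positivity)
              (by positivity)
        _ ≤ ((j:ℝ)*((j:ℝ)+(l:ℝ)) * ((7^n * (1+|u|)^n) * c^(j-1))) * 7 :=
            mul_le_mul_of_nonneg_right (mul_le_mul_of_nonneg_left
              (mul_le_mul_of_nonneg_right (h7 u) (by positivity)) (by positivity))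
              (by norm_num)
        _ = P' * c^(j-1) * (1+|u|)^n := by rw [hP', pow_succ]; ring
    have b2 : |m (2*π*u)| ≤ P * c^(j-1) * (1+|u|)^n := by
      calc |m (2*π*u)| ≤ (j:ℝ) * ((1+|2*π*u|)^n * c^(j-1)) := hm_bound _
        _ ≤ (j:ℝ) * ((7^n * (1+|u|)^n) * c^(j-1)) :=
            mul_le_mul_of_nonneg_left
              (mul_le_mul_of_nonneg_right (h7 u) (by positivity)) (Nat.cast_nonneg j)
        _ = P * c^(j-1) * (1+|u|)^n := by rw [hP]; ring
    refine le_trans (add_le_add (mul_le_mul_of_nonneg_right b2 (norm_nonneg _))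
      (mul_le_mul_of_nonneg_right b1 (norm_nonneg _))) (le_of_eq (by ring))
  -- integrability
  have hφcont : Continuous φ := hdiff.continuous
  have hmaj1 : Integrable (fun u : ℝ => P * c^(j-1) * ((1+|u|)^n * ‖G u‖)) :=
    hKiInt.const_mul _
  have hmaj2 : Integrable (fun u : ℝ => P' * c^(j-1) * ((1+|u|)^n * ‖G u‖)
      + P * c^(j-1) * ((1+|u|)^n * ‖G' u‖)) :=
    (hKiInt.const_mul _).add (hKi'Int.const_mul _)
  have hφint : Integrable φ := hmaj1.mono' hφcont.aestronglyMeasurable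
      (by filter_upwards with u; exact hφ_bound u)
  have hm_cont : Continuous m :=
    Differentiable.continuous (fun σ => (hmderiv σ).differentiableAt)
  have hD_cont : Continuous D :=
    Differentiable.continuous (fun σ => (hmD σ).differentiableAt)
  have hder_cont : Continuous (fun σ : ℝ => hder (σ+β)) := by
    simp only [hder]
    exact (continuous_const.mul ((continuous_const.add
      ((continuous_id.add continuous_const).pow 2)).rpow_const
      (fun x => Or.inl (by simp only [Pi.add_apply, Pi.pow_apply, id]; positivity)))).mul
      (continuous_const.mul (continuous_id.add continuous_const))
  have hm'_cont : Continuous m' := by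
    simp only [hm']
    apply continuous_finset_sum
    intro j' _
    exact ((((continuous_const.mul (hD_cont.pow _)).mul hder_cont).mul
      continuous_const).mul (continuous_pow l)).add
      (((hD_cont.pow _).mul continuous_const).mul (continuous_const.mul (continuous_pow (l-1))))
  have hscale : Continuous (fun u : ℝ => 2*π*u) := continuous_const.mul continuous_id
  have hφ'cont : Continuous φ' := by
    simp only [hφ']
    exact ((hm_cont.comp hscale).smul G'.continuous).add
      (((hm'_cont.comp hscale).mul continuous_const).smul G.continuous)
  have hφ'int : Integrable φ' := hmaj2.mono' hφ'cont.aestronglyMeasurable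
      (by filter_upwards with u; exact hφ'_bound u)
  -- Fourier bounds
  have hFT := Real.fourier_deriv hφint hdiff (hderiveq ▸ hφ'int)
  have normle : ∀ z : ℝ, ∀ f : ℝ → ℂ, ‖𝓕 f z‖ ≤ ∫ u, ‖f u‖ := fun z f =>
    VectorFourier.norm_fourierIntegral_le_integral_norm _ _ _ _ _
  have hFa : ∀ z : ℝ, ‖𝓕 φ z‖ ≤ P * Ki * c^(j-1) := by
    intro z
    refine (normle z φ).trans ?_
    calc (∫ u, ‖φ u‖) ≤ ∫ u : ℝ, P * c^(j-1) * ((1+|u|)^n * ‖G u‖) :=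
          integral_mono hφint.norm hmaj1 hφ_bound
      _ = P * c^(j-1) * Ki := by rw [integral_const_mul]
      _ = P * Ki * c^(j-1) := by ring
  have hFb : ∀ z : ℝ, |z| * ‖𝓕 φ z‖ ≤ (P' * Ki + P * Ki') * c^(j-1) := by
    intro z
    have h1 : ‖𝓕 (deriv φ) z‖ ≤ (P' * Ki + P * Ki') * c^(j-1) := by
      refine (normle z _).trans ?_
      rw [hderiveq]
      calc (∫ u, ‖φ' u‖)
          ≤ ∫ u : ℝ, (P' * c^(j-1) * ((1+|u|)^n * ‖G u‖)
              + P * c^(j-1) * ((1+|u|)^n * ‖G' u‖)) :=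
            integral_mono hφ'int.norm hmaj2 hφ'_bound
        _ = P' * c^(j-1) * Ki + P * c^(j-1) * Ki' := by
            rw [integral_add (hKiInt.const_mul _) (hKi'Int.const_mul _),
              integral_const_mul, integral_const_mul]
        _ = (P' * Ki + P * Ki') * c^(j-1) := by ring
    simp only [hFT] at h1
    rw [norm_smul] at h1
    have h2 : ‖(2*(π:ℂ)*I*(z:ℂ))‖ = 2*π*|z| := by
      simp [norm_mul, Real.norm_eq_abs, _root_.abs_of_pos Real.pi_pos]
    rw [h2] at h1
    nlinarith [norm_nonneg (𝓕 φ z), abs_nonneg z, Real.pi_gt_three,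
      mul_nonneg (abs_nonneg z) (norm_nonneg (𝓕 φ z))]
  -- rewrite the goal
  have hGeq : ⇑G = 𝓕 ⇑g := rfl
  have key : (fun z : ℝ => ‖((((2 * π)⁻¹ : ℝ)) : ℂ) * ∫ σ : ℝ, Complex.exp (Complex.I * σ * z)
      * (∑ j' ∈ Finset.range j,
          ((((1 + (σ + β) ^ 2) ^ ((1 : ℝ) / 4) - c) ^ (j - j')
              * c ^ j' * σ ^ l : ℝ) : ℂ))
      * (∫ w : ℝ, Complex.exp (-Complex.I * w * σ) * g w)‖ ^ 2)
      = fun z : ℝ => ‖𝓕 φ (-z)‖ ^ 2 := by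
    funext z
    have e1 : ∀ σ : ℝ, Complex.exp (Complex.I * σ * z)
        * (∑ j' ∈ Finset.range j,
            ((((1 + (σ + β) ^ 2) ^ ((1 : ℝ) / 4) - c) ^ (j - j')
                * c ^ j' * σ ^ l : ℝ) : ℂ))
        * (∫ w : ℝ, Complex.exp (-Complex.I * w * σ) * g w)
        = Complex.exp (Complex.I * σ * z) * ((m σ : ℝ) : ℂ) * 𝓕 (⇑g) (σ/(2*π)) := by
      intro σ
      rw [inner_integral_eq g σ]
      congr 2
      simp only [hm, hD]
      push_cast
      rfl
    have e2 : (∫ σ : ℝ, Complex.exp (Complex.I * σ * z)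
        * (∑ j' ∈ Finset.range j,
            ((((1 + (σ + β) ^ 2) ^ ((1 : ℝ) / 4) - c) ^ (j - j')
                * c ^ j' * σ ^ l : ℝ) : ℂ))
        * (∫ w : ℝ, Complex.exp (-Complex.I * w * σ) * g w))
        = ∫ σ : ℝ, Complex.exp (Complex.I * σ * z) * ((m σ : ℝ) : ℂ) * 𝓕 (⇑g) (σ/(2*π)) :=
      integral_congr_ae (Filter.Eventually.of_forall e1)
    rw [e2]
    have e3 : ∀ F : ℝ → ℂ, (∫ σ : ℝ, F σ) = (2*π) • ∫ u : ℝ, F (2*π*u) := by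
      intro F
      have h := MeasureTheory.Measure.integral_comp_mul_left F (2*π)
      rw [_root_.abs_of_pos (by positivity : (0:ℝ) < (2*π)⁻¹)] at h
      rw [h, smul_smul, mul_inv_cancel₀ (by positivity : (2*π:ℝ) ≠ 0), one_smul]
    rw [e3 (fun σ : ℝ => Complex.exp (Complex.I * σ * z) * ((m σ : ℝ) : ℂ) * 𝓕 (⇑g) (σ/(2*π)))]
    have e4 : (∫ u : ℝ, (fun σ : ℝ => Complex.exp (Complex.I * σ * z) * ((m σ : ℝ) : ℂ)
        * 𝓕 (⇑g) (σ/(2*π))) (2*π*u)) = 𝓕 φ (-z) := by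
      rw [fourier_neg_eq]
      apply integral_congr_ae (Filter.Eventually.of_forall _)
      intro u
      simp only
      have hu : (2*π*u)/(2*π) = u := by field_simp
      rw [hu, ← hGeq]
      simp only [hφ]
      rw [smul_eq_mul, Complex.real_smul]
      push_cast
      ring
    rw [e4]
    have e5 : ((((2 * π)⁻¹ : ℝ)) : ℂ) * ((2*π:ℝ) • 𝓕 φ (-z)) = 𝓕 φ (-z) := by
      rw [Complex.real_smul, ← mul_assoc, ← Complex.ofReal_mul,
        inv_mul_cancel₀ (ne_of_gt (by positivity : (0:ℝ) < 2*π)), Complex.ofReal_one, one_mul]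
    rw [e5]
  rw [key]
  -- final estimate
  set a : ℝ := P * Ki * c^(j-1) with ha
  set b : ℝ := (P' * Ki + P * Ki') * c^(j-1) with hb
  have ha0 : 0 ≤ a := by positivity
  have hb0 : 0 ≤ b := by positivity
  have hpt : ∀ z : ℝ, ‖𝓕 φ (-z)‖^2 ≤ 2*(a^2+b^2) * (1+z^2)⁻¹ := by
    intro z
    have h1 : ‖𝓕 φ (-z)‖ ≤ a := hFa (-z)
    have h2 : |z| * ‖𝓕 φ (-z)‖ ≤ b := by
      have := hFb (-z)
      rwa [abs_neg] at this
    have hz : (0:ℝ) < 1 + z^2 := by positivity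
    have hF0 : (0:ℝ) ≤ ‖𝓕 φ (-z)‖ := norm_nonneg _
    have key2 : ‖𝓕 φ (-z)‖^2 * (1+z^2) ≤ 2*(a^2+b^2) := by
      rcases le_total (z^2) 1 with hz1 | hz1
      · nlinarith [sq_nonneg b]
      · have h2' : ‖𝓕 φ (-z)‖^2 * z^2 ≤ b^2 := by
          have e : ‖𝓕 φ (-z)‖^2 * z^2 = (|z| * ‖𝓕 φ (-z)‖)^2 := by
            rw [mul_pow, _root_.sq_abs]; ring
          rw [e]
          exact pow_le_pow_left₀ (by positivity) h2 2
        nlinarith [sq_nonneg a, h2', hz1, hF0, mul_le_mul_of_nonneg_left hz1 (mul_nonneg hF0 hF0)]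
    calc ‖𝓕 φ (-z)‖^2 = ‖𝓕 φ (-z)‖^2 * (1+z^2) * (1+z^2)⁻¹ := by field_simp
      _ ≤ 2*(a^2+b^2) * (1+z^2)⁻¹ := mul_le_mul_of_nonneg_right key2 (by positivity)
  have hFcont : Continuous (𝓕 φ) :=
    VectorFourier.fourierIntegral_continuous Real.continuous_fourierChar
      (by exact continuous_inner) hφint
  have hIntSq : Integrable (fun z : ℝ => ‖𝓕 φ (-z)‖^2) := by
    apply Integrable.mono' ((integrable_inv_one_add_sq).const_mul (2*(a^2+b^2)))
    · exact (((hFcont.comp continuous_neg).norm).pow 2).aestronglyMeasurable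
    · filter_upwards with z
      rw [Real.norm_eq_abs, _root_.abs_of_nonneg (by positivity)]
      exact hpt z
  have hIle : (∫ z : ℝ, ‖𝓕 φ (-z)‖^2) ≤ 2*(a^2+b^2)*π := by
    calc (∫ z : ℝ, ‖𝓕 φ (-z)‖^2) ≤ ∫ z : ℝ, 2*(a^2+b^2) * (1+z^2)⁻¹ :=
          integral_mono hIntSq ((integrable_inv_one_add_sq).const_mul _) hpt
      _ = 2*(a^2+b^2) * π := by rw [integral_const_mul, integral_univ_inv_one_add_sq]
  calc Real.sqrt (∫ z : ℝ, ‖𝓕 φ (-z)‖^2) ≤ Real.sqrt (2*π*(a+b)^2) := by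
        apply Real.sqrt_le_sqrt
        nlinarith [mul_nonneg ha0 hb0, Real.pi_pos]
    _ = Real.sqrt (2*π) * (a+b) := by
        rw [Real.sqrt_mul (by positivity) ((a+b)^2), Real.sqrt_sq (by positivity)]
    _ = Real.sqrt (2*π) * ((P + P') * Ki + P * Ki') * c^(j-1) := by
        rw [ha, hb]; ring
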